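/- arXiv:1206.3691 — 2 statements merged into one kernel-verified Lean document; each statement's English description precedes it below -/
import Mathlib

section
/- Let y solve y'(t)=D(y*−y(t))−b̃(y(t)) on [0,1] with y(0)=y₀∈[0,y*], where b̃(y)=b(y)/R+η·1_{y>0} and b bounded by b_∞. Then there is a constant c>0, independent of y₀∈[0,y*], such that y(t)≥c·t for all t∈[0,1], provided D y* > b̃(0⁺)=η (i.e., the right-hand side at y=0 is positive). -/
/-!
Write `F` for the right-hand side and `M = D y* - η`. Because `b` is continuous with `b 0 = 0`,
`F > M / 2` on some interval `[0, δ]` (the indicator term is at most `η`). A solution starting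
in `[0, y*]` therefore rises faster than `ε = M / 2` as long as it lies in `[0, δ]`, so it cannot
cross the barrier `min δ (ε t)` from above; on `[0, 1]` this barrier dominates `min δ ε * t`.
-/

open Set

lemma min_mul_le_min_mul_of_le_one {δ ε t : ℝ} (hδ : 0 ≤ δ) (ht₀ : 0 ≤ t) (ht₁ : t ≤ 1) :
    min δ ε * t ≤ min δ (ε * t) := by
  rw [min_mul_of_nonneg _ _ ht₀]
  exact min_le_min_right _ (mul_le_of_le_one_right hδ ht₁)

lemma slope_min_mul_le {δ ε x z : ℝ} (hε : 0 ≤ ε) (hxz : x < z) :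
    slope (fun t => min δ (ε * t)) x z ≤ ε := by
  rw [slope_def_field, div_le_iff₀ (sub_pos.2 hxz)]
  have : min δ (ε * z) ≤ min δ (ε * x) + ε * (z - x) := by
    rw [← min_add_add_right]
    exact min_le_min (le_add_of_nonneg_right (by nlinarith)) (by linarith)
  linarith

/- The barrier need not be differentiable: by `slope_min_mul_le`, `ε` bounds its right lower
Dini derivative, which is all the comparison theorem asks for. -/
theorem min_mul_le_of_hasDerivWithinAt {y y' : ℝ → ℝ} {δ ε T : ℝ} (hδ : 0 ≤ δ) (hε : 0 ≤ ε)
    (hy : ContinuousOn y (Icc 0 T)) (hy' : ∀ t ∈ Ico 0 T, HasDerivWithinAt y (y' t) (Ici t) t)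
    (hy₀ : 0 ≤ y 0) (hgrowth : ∀ t ∈ Ico 0 T, y t ∈ Icc 0 δ → ε < y' t) :
    ∀ t ∈ Icc 0 T, min δ (ε * t) ≤ y t := by
  refine image_le_of_liminf_slope_right_lt_deriv_boundary' (f' := fun _ => ε)
    (by fun_prop) (fun x _ r hr => ?_) ((min_le_right _ _).trans (by simpa using hy₀)) hy hy'
    (fun t ht heq => hgrowth t ht ?_)
  · exact (eventually_nhdsWithin_of_forall fun z (hz : z ∈ Ioi x) =>
      (slope_min_mul_le hε hz).trans_lt hr).frequently
  · exact heq ▸ ⟨le_min hδ (mul_nonneg hε ht.1), min_le_left _ _⟩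

lemma exists_pos_forall_Icc_lt_vectorField {D ystar R η : ℝ} {b : ℝ → ℝ} (hη : 0 ≤ η)
    (hpos : η < D * ystar) (hb_cont : ContinuousWithinAt b (Ici 0) 0) (hb0 : b 0 = 0) :
    ∃ δ > 0, ∀ x ∈ Icc 0 δ,
      (D * ystar - η) / 2 < D * (ystar - x) - (b x / R + if 0 < x then η else 0) := by
  have hg : ContinuousWithinAt (fun x => D * (ystar - x) - (b x / R + η)) (Ici 0) 0 := by
    fun_prop
  have hlt : (D * ystar - η) / 2 < D * (ystar - 0) - (b 0 / R + η) := by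
    rw [hb0, zero_div, sub_zero]; linarith
  obtain ⟨δ, hδ, hsub⟩ := mem_nhdsGE_iff_exists_Icc_subset.1 (hg.eventually_const_lt hlt)
  refine ⟨δ, hδ, fun x hx => (hsub hx).trans_le ?_⟩
  have : (if 0 < x then η else 0) ≤ η := by split_ifs <;> linarith
  linarith

theorem stmt9_general (D ystar R η : ℝ) (hη : 0 ≤ η) (hpos : η < D * ystar)
    (b : ℝ → ℝ) (hb_cont : ContinuousOn b (Set.Ici 0)) (hb0 : b 0 = 0) :
    ∃ c > (0:ℝ), ∀ y : ℝ → ℝ, y 0 ∈ Set.Icc 0 ystar →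
      (∀ t ∈ Set.Icc (0:ℝ) 1,
        HasDerivAt y
          (D * (ystar - y t) - (b (y t) / R + if 0 < y t then η else 0)) t) →
      ∀ t ∈ Set.Icc (0:ℝ) 1, c * t ≤ y t := by
  obtain ⟨δ, hδ, hF⟩ :=
    exists_pos_forall_Icc_lt_vectorField (R := R) hη hpos (hb_cont 0 self_mem_Ici) hb0
  have hε : 0 < (D * ystar - η) / 2 := by linarith
  refine ⟨min δ ((D * ystar - η) / 2), lt_min hδ hε, fun y hy₀ hy t ht => ?_⟩
  have hbarrier := min_mul_le_of_hasDerivWithinAt hδ.le hε.le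
    (fun s hs => (hy s hs).continuousAt.continuousWithinAt)
    (fun s hs => (hy s (Ico_subset_Icc_self hs)).hasDerivWithinAt) hy₀.1
    (fun s _ hys => hF (y s) hys) t ht
  exact (min_mul_le_min_mul_of_le_one hδ.le ht.1 ht.2).trans hbarrier

/-- uniform linear lower bound y(t) ≥ c·t on [0,1] for solutions of
    y' = D(y*−y) − b̃(y), with b̃(y)=b(y)/R+η·1_{y>0}, provided D y* > η,
    with c independent of the initial condition y₀ ∈ [0,y*]. -/
theorem stmt9 (D ystar R η binf : ℝ) (hD : 0 < D) (hystar : 0 < ystar)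
    (hR : 0 < R) (hη : 0 ≤ η) (hpos : η < D * ystar)
    (b : ℝ → ℝ) (hb_cont : ContinuousOn b (Set.Ici 0))
    (hb_mono : MonotoneOn b (Set.Ici 0)) (hb0 : b 0 = 0)
    (hb_bound : ∀ y ≥ (0:ℝ), b y ≤ binf) :
    ∃ c > (0:ℝ), ∀ y : ℝ → ℝ, y 0 ∈ Set.Icc 0 ystar →
      (∀ t ∈ Set.Icc (0:ℝ) 1,
        HasDerivAt y
          (D * (ystar - y t) - (b (y t) / R + if 0 < y t then η else 0)) t) →
      ∀ t ∈ Set.Icc (0:ℝ) 1, c * t ≤ y t :=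
  stmt9_general D ystar R η hη hpos b hb_cont hb0
end

section
/- Let G:ℝ→ℝ be C¹ with a simple zero at y₁ (G(y₁)=0, G'(y₁)<0), let f be bounded measurable, h continuous with h≥0 near y₁, and let u be an integrable function on a neighborhood of y₁ satisfying (G u)'(y)=f(y)G(y)u(y)+h(y) for y≠y₁. Then u(y) = (1/G(y))·exp(∫_{y₁}^y f) · ∫_{y₁}^y exp(−∫_{y₁}^s f) h(s) ds, and if h>0 on a set of positive measure on one side of y₁ then u<0 somewhere there. -/
/-!
With `v = G u`, `F y = ∫_{y₁}^y f` and `H y = ∫_{y₁}^y exp (-F) h`, the equation `v' = f v + h`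
says that `exp (-F) v - H` has derivative `0` wherever `F' = f`, i.e. almost everywhere. Since `f`
is merely measurable, `F` is only Lipschitz, and the identity is integrated with the fundamental
theorem of calculus for absolutely continuous functions: `exp (-F) v - H` is a constant `C` on each
side of `y₁`, so `G u → C` as `y → y₁` from that side. As `G` vanishes to first order at `y₁`,
`C ≠ 0` would force `|u y| ≳ |y - y₁|⁻¹`, which is not integrable; hence `C = 0`, which is the
formula. For the sign, `G y` has the sign of `y₁ - y` (a simple zero, and no other zero nearby),
while, `h` being nonnegative, `H y` has the sign of `y - y₁` at every `y` where `h y > 0`.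
-/

open MeasureTheory intervalIntegral Set Filter Topology Asymptotics Real

namespace AbsolutelyContinuousOnInterval

variable {X Y : Type*} [PseudoMetricSpace X] [PseudoMetricSpace Y] {a b : ℝ}

theorem congr {f g : ℝ → X} (hf : AbsolutelyContinuousOnInterval f a b)
    (hfg : EqOn f g (uIcc a b)) : AbsolutelyContinuousOnInterval g a b := by
  refine Tendsto.congr' ?_ hf
  filter_upwards [mem_inf_of_right (mem_principal_self _)] with E hE
  exact Finset.sum_congr rfl fun i hi => by rw [hfg (hE.1 i hi).1, hfg (hE.1 i hi).2]

theorem comp_lipschitzOnWith {f : ℝ → X} {g : X → Y} {K : NNReal} {s : Set X}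
    (hf : AbsolutelyContinuousOnInterval f a b) (hg : LipschitzOnWith K g s)
    (hfs : MapsTo f (uIcc a b) s) : AbsolutelyContinuousOnInterval (g ∘ f) a b := by
  unfold AbsolutelyContinuousOnInterval at hf ⊢
  refine squeeze_zero' (Eventually.of_forall fun E => Finset.sum_nonneg fun _ _ => dist_nonneg)
    ?_ (mul_zero (K : ℝ) ▸ hf.const_mul (K : ℝ))
  filter_upwards [mem_inf_of_right (mem_principal_self _)] with E hE
  rw [Finset.mul_sum]
  exact Finset.sum_le_sum fun i hi => hg.dist_le_mul _ (hfs (hE.1 i hi).1) _ (hfs (hE.1 i hi).2)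

end AbsolutelyContinuousOnInterval

theorem absolutelyContinuousOnInterval_const {X : Type*} [PseudoMetricSpace X] (x : X)
    (a b : ℝ) : AbsolutelyContinuousOnInterval (fun _ => x) a b :=
  (LipschitzWith.const x).lipschitzOnWith.absolutelyContinuousOnInterval

theorem ContDiff.comp_absolutelyContinuousOnInterval {E F : Type*} [NormedAddCommGroup E]
    [NormedSpace ℝ E] [ProperSpace E] [NormedAddCommGroup F] [NormedSpace ℝ F]
    {g : E → F} {f : ℝ → E} {a b : ℝ} (hg : ContDiff ℝ 1 g)
    (hf : AbsolutelyContinuousOnInterval f a b) :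
    AbsolutelyContinuousOnInterval (fun x => g (f x)) a b := by
  obtain ⟨C, hC⟩ := hf.exists_bound
  obtain ⟨K, hK⟩ := hg.contDiffOn.exists_lipschitzOnWith one_ne_zero (convex_closedBall 0 C)
    (isCompact_closedBall 0 C)
  exact hf.comp_lipschitzOnWith hK fun x hx => mem_closedBall_zero_iff.2 (hC x hx)

theorem MeasureTheory.LocallyIntegrable.intervalIntegrable {E : Type*} [NormedAddCommGroup E]
    {f : ℝ → E} {μ : Measure ℝ} [IsLocallyFiniteMeasure μ] (hf : LocallyIntegrable f μ)
    (a b : ℝ) : IntervalIntegrable f μ a b :=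
  (hf.integrableOn_isCompact isCompact_uIcc).intervalIntegrable

theorem MeasureTheory.LocallyIntegrable.absolutelyContinuousOnInterval_intervalIntegral
    {f : ℝ → ℝ} (hf : LocallyIntegrable f volume) (c a b : ℝ) :
    AbsolutelyContinuousOnInterval (fun x => ∫ t in c..x, f t) a b := by
  refine ((absolutelyContinuousOnInterval_const (∫ t in c..a, f t) a b).fun_add
    ((hf.intervalIntegrable a b).absolutelyContinuousOnInterval_intervalIntegral
      left_mem_uIcc)).congr fun x _ => ?_
  exact integral_add_adjacent_intervals (hf.intervalIntegrable c a) (hf.intervalIntegrable a x)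

theorem absolutelyContinuousOnInterval_of_hasDerivAt {v v' : ℝ → ℝ} {a b : ℝ}
    (hv : ∀ x ∈ uIcc a b, HasDerivAt v (v' x) x) (hv' : IntervalIntegrable v' volume a b) :
    AbsolutelyContinuousOnInterval v a b := by
  refine ((absolutelyContinuousOnInterval_const (v a) a b).fun_add
    (hv'.absolutelyContinuousOnInterval_intervalIntegral left_mem_uIcc)).congr fun x hx => ?_
  dsimp only
  rw [integral_eq_sub_of_hasDerivAt (fun y hy => hv y (uIcc_subset_uIcc_left hx hy))
    (hv'.mono_set (uIcc_subset_uIcc_left hx))]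
  ring

theorem exp_neg_integral_mul_sub_eq_integral {f h v : ℝ → ℝ} {a b : ℝ} (c : ℝ)
    (hf : LocallyIntegrable f volume) (hh : IntervalIntegrable h volume a b)
    (hv : ∀ y ∈ uIcc a b, HasDerivAt v (f y * v y + h y) y) :
    exp (-∫ t in c..b, f t) * v b - exp (-∫ t in c..a, f t) * v a =
      ∫ s in a..b, exp (-∫ t in c..s, f t) * h s := by
  have hv' : IntervalIntegrable (fun y => f y * v y + h y) volume a b :=
    ((hf.intervalIntegrable a b).mul_continuousOn
      fun y hy => (hv y hy).continuousAt.continuousWithinAt).add hh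
  have hE : AbsolutelyContinuousOnInterval (fun x => exp (-∫ t in c..x, f t)) a b :=
    contDiff_exp.comp_absolutelyContinuousOnInterval
      (hf.absolutelyContinuousOnInterval_intervalIntegral c a b).fun_neg
  rw [← (hE.fun_mul (absolutelyContinuousOnInterval_of_hasDerivAt hv hv')).integral_deriv_eq_sub]
  refine integral_congr_ae ?_
  filter_upwards [LocallyIntegrable.ae_hasDerivAt_integral hf] with x hF hx
  rw [((hF c).fun_neg.exp.fun_mul (hv x (uIoc_subset_uIcc hx))).deriv]
  ring

theorem not_integrableOn_of_sub_inv_isBigO {F : Type*} [NormedAddCommGroup F] {w : ℝ → F}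
    {r : ℝ} {k : Set ℝ} (l : Filter ℝ) [NeBot l] [TendstoIxxClass Icc l l] (hl : l ≤ 𝓝[≠] r)
    (hk : k ∈ l) (hw : (fun x => (x - r)⁻¹) =O[l] w) : ¬IntegrableOn w k := by
  have hlog : ∀ᶠ x in l, HasDerivAt (fun x => Real.log (x - r)) (x - r)⁻¹ x := by
    filter_upwards [eventually_mem_nhdsWithin.filter_mono hl] with x hx
    simpa using ((hasDerivAt_id x).sub_const r).log (sub_ne_zero.2 hx)
  have hlim : Tendsto (fun x => ‖Real.log (x - r)‖) l atTop := by
    refine tendsto_abs_atBot_atTop.comp (Real.tendsto_log_nhdsNE_zero.comp ?_)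
    rw [← sub_self r]
    exact (((hasDerivAt_id r).sub_const r).tendsto_nhdsNE one_ne_zero).mono_left hl
  exact not_integrableOn_of_tendsto_norm_atTop_of_deriv_isBigO_filter l hk
    (hlog.mono fun x hx => hx.differentiableAt) hlim
    (hw.congr' (hlog.mono fun x hx => hx.deriv.symm) EventuallyEq.rfl)

theorem not_integrableOn_of_tendsto_mul {G u : ℝ → ℝ} {r C : ℝ} {k : Set ℝ} (l : Filter ℝ)
    [NeBot l] [TendstoIxxClass Icc l l] (hl : l ≤ 𝓝[≠] r) (hk : k ∈ l)
    (hG : DifferentiableAt ℝ G r) (hGr : G r = 0) (hC : C ≠ 0)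
    (hGu : Tendsto (fun z => G z * u z) l (𝓝 C)) : ¬IntegrableOn u k := by
  refine not_integrableOn_of_sub_inv_isBigO l hl hk ?_
  have hGO : G =O[l] fun x => x - r := by
    simpa [hGr] using hG.hasDerivAt.isBigO_sub.mono (hl.trans nhdsWithin_le_nhds)
  have hone : (fun _ => (1 : ℝ)) =O[l] fun x => G x * u x := by
    refine (isBigO_const_left_iff_pos_le_norm one_ne_zero).2 ⟨‖C‖ / 2, by positivity, ?_⟩
    exact (hGu.norm.eventually (lt_mem_nhds (half_lt_self (norm_pos_iff.2 hC)))).mono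
      fun _ => le_of_lt
  have hne : ∀ᶠ x in l, x - r ≠ 0 :=
    (eventually_mem_nhdsWithin.filter_mono hl).mono fun x hx => sub_ne_zero.2 hx
  calc (fun x => (x - r)⁻¹) =ᶠ[l] fun x => (x - r)⁻¹ * 1 := by simp
    _ =O[l] fun x => (x - r)⁻¹ * (G x * u x) := (isBigO_refl _ _).mul hone
    _ =ᶠ[l] fun x => (x - r)⁻¹ * G x * u x := by filter_upwards with x; ring
    _ =O[l] fun x => (x - r)⁻¹ * (x - r) * u x :=
      ((isBigO_refl _ _).mul hGO).mul (isBigO_refl _ _)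
    _ =ᶠ[l] u := by filter_upwards [hne] with x hx; rw [inv_mul_cancel₀ hx, one_mul]

theorem mul_eq_exp_integral_mul_integral_of_integrableOn {G f h u : ℝ → ℝ} {y₁ : ℝ}
    {S : Set ℝ} (l : Filter ℝ) [NeBot l] [TendstoIxxClass Icc l l] (hl : l ≤ 𝓝[≠] y₁)
    (hSl : S ∈ l) (hS : S.OrdConnected) (hG : DifferentiableAt ℝ G y₁) (hGy₁ : G y₁ = 0)
    (hf : LocallyIntegrable f volume) (hh : Continuous h) (hu : IntegrableOn u S)
    (hode : ∀ y ∈ S, HasDerivAt (fun z => G z * u z) (f y * (G y * u y) + h y) y) :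
    ∀ y ∈ S, G y * u y =
      exp (∫ t in y₁..y, f t) * ∫ s in y₁..y, exp (-∫ t in y₁..s, f t) * h s := by
  intro y hy
  set F : ℝ → ℝ := fun x => ∫ t in y₁..x, f t with hF
  set H : ℝ → ℝ := fun x => ∫ s in y₁..x, exp (-F s) * h s with hH
  have hFc : Continuous F := continuous_primitive hf.intervalIntegrable y₁
  have hHi : ∀ p q, IntervalIntegrable (fun s => exp (-F s) * h s) volume p q :=
    ((continuous_exp.comp hFc.neg).mul hh).intervalIntegrable
  set C := exp (-F y) * (G y * u y) - H y
  have hconst : ∀ z ∈ S, G z * u z = exp (F z) * (C + H z) := by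
    intro z hz
    have key := exp_neg_integral_mul_sub_eq_integral y₁ hf (hh.intervalIntegrable y z)
      fun x hx => hode x (hS.uIcc_subset hy hz hx)
    rw [← integral_interval_sub_left (hHi y₁ z) (hHi y₁ y)] at key
    have hinv : exp (F z) * exp (-F z) = 1 := by rw [← exp_add, add_neg_cancel, exp_zero]
    linear_combination exp (F z) * key - G z * u z * hinv
  have hlim : Tendsto (fun z => G z * u z) l (𝓝 C) := by
    have hcont : Continuous fun z => exp (F z) * (C + H z) :=
      (continuous_exp.comp hFc).mul (continuous_const.add (continuous_primitive hHi y₁))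
    have h0 : exp (F y₁) * (C + H y₁) = C := by simp [hF, hH]
    refine (h0 ▸ hcont.tendsto y₁).mono_left (hl.trans nhdsWithin_le_nhds) |>.congr' ?_
    filter_upwards [hSl] with z hz using (hconst z hz).symm
  have hC : C = 0 := by
    by_contra hC
    exact not_integrableOn_of_tendsto_mul l hl hSl hG hGy₁ hC hlim hu
  simpa [hC] using hconst y hy

theorem mul_eq_exp_integral_mul_integral_of_integrableOn_Ioo {G f h u : ℝ → ℝ} {y₁ ε : ℝ}
    (hG : DifferentiableAt ℝ G y₁) (hGy₁ : G y₁ = 0) (hf : LocallyIntegrable f volume)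
    (hh : Continuous h) (hu : IntegrableOn u (Ioo (y₁ - ε) (y₁ + ε)))
    (hode : ∀ y ∈ Ioo (y₁ - ε) (y₁ + ε), y ≠ y₁ →
      HasDerivAt (fun z => G z * u z) (f y * (G y * u y) + h y) y) :
    ∀ y ∈ Ioo (y₁ - ε) (y₁ + ε), y ≠ y₁ →
      G y * u y = exp (∫ t in y₁..y, f t) * ∫ s in y₁..y, exp (-∫ t in y₁..s, f t) * h s := by
  rintro y ⟨hy₁, hy₂⟩ hne
  rcases hne.lt_or_gt with hlt | hgt
  · refine mul_eq_exp_integral_mul_integral_of_integrableOn (𝓝[<] y₁) (nhdsLT_le_nhdsNE y₁)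
      (Ioo_mem_nhdsLT (hy₁.trans hlt)) ordConnected_Ioo hG hGy₁ hf hh
      (hu.mono_set (Ioo_subset_Ioo_right (by linarith)))
      (fun z hz => hode z ⟨hz.1, by linarith [hz.2]⟩ hz.2.ne) y ⟨hy₁, hlt⟩
  · refine mul_eq_exp_integral_mul_integral_of_integrableOn (𝓝[>] y₁) (nhdsGT_le_nhdsNE y₁)
      (Ioo_mem_nhdsGT (hgt.trans hy₂)) ordConnected_Ioo hG hGy₁ hf hh
      (hu.mono_set (Ioo_subset_Ioo_left (by linarith)))
      (fun z hz => hode z ⟨by linarith [hz.1], hz.2⟩ hz.1.ne') y ⟨hgt, hy₂⟩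

theorem mul_pos_of_continuousOn_of_ne_zero {G : ℝ → ℝ} {a b : ℝ}
    (hG : ContinuousOn G (uIcc a b)) (h0 : ∀ x ∈ uIcc a b, G x ≠ 0) : 0 < G a * G b := by
  by_contra! hle
  have hmem : (0 : ℝ) ∈ uIcc (G a) (G b) := by
    rcases mul_nonpos_iff.1 hle with h | h
    · exact mem_uIcc.2 (Or.inr ⟨h.2, h.1⟩)
    · exact mem_uIcc.2 (Or.inl h)
  obtain ⟨x, hx, hGx⟩ := intermediate_value_uIcc hG hmem
  exact h0 x hx hGx

theorem mul_sub_neg_of_deriv_neg {G : ℝ → ℝ} {y₁ y : ℝ} {J : Set ℝ} (hJ : J.OrdConnected)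
    (hG : ContinuousOn G J) (hGy₁ : G y₁ = 0) (hG' : deriv G y₁ < 0)
    (hzero : ∀ x ∈ J, G x = 0 → x = y₁) (hy₁ : y₁ ∈ J) (hy : y ∈ J) (hne : y ≠ y₁) :
    G y * (y - y₁) < 0 := by
  have hsign := eventually_nhdsWithin_sign_eq_of_deriv_neg hG' hGy₁
  have hpos : ∀ z ∈ J, (y₁ < z ∧ y₁ < y ∨ z < y₁ ∧ y < y₁) → 0 < G z * G y := by
    intro z hz hside
    refine mul_pos_of_continuousOn_of_ne_zero (hG.mono (hJ.uIcc_subset hz hy))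
      fun x hx hGx => ?_
    have hxy₁ := hzero x (hJ.uIcc_subset hz hy hx) hGx
    rcases hside with ⟨h1, h2⟩ | ⟨h1, h2⟩ <;> rcases mem_uIcc.1 hx with ⟨h3, h4⟩ | ⟨h3, h4⟩ <;>
      linarith
  rcases hne.lt_or_gt with hlt | hgt
  · obtain ⟨z, hzs, hz⟩ :=
      ((hsign.filter_mono nhdsWithin_le_nhds).and (Ico_mem_nhdsLT hlt)).exists
    have hGz : 0 < G z := sign_eq_one_iff.1 (hzs.trans (sign_pos (by linarith [hz.2])))
    nlinarith [hpos z (hJ.uIcc_subset hy hy₁ (Ico_subset_Icc_self.trans Icc_subset_uIcc hz))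
      (Or.inr ⟨hz.2, hlt⟩)]
  · obtain ⟨z, hzs, hz⟩ :=
      ((hsign.filter_mono nhdsWithin_le_nhds).and (Ioc_mem_nhdsGT hgt)).exists
    have hGz : G z < 0 := sign_eq_neg_one_iff.1 (hzs.trans (sign_neg (by linarith [hz.1])))
    nlinarith [hpos z (hJ.uIcc_subset hy₁ hy (Ioc_subset_Icc_self.trans Icc_subset_uIcc hz))
      (Or.inl ⟨hz.1, hgt⟩)]

theorem integral_mul_sub_pos {g : ℝ → ℝ} {a b : ℝ} (hg : Continuous g) (hab : a ≠ b)
    (h0 : ∀ x ∈ uIcc a b, 0 ≤ g x) (hb : 0 < g b) : 0 < (∫ x in a..b, g x) * (b - a) := by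
  rcases hab.lt_or_gt with hlt | hgt
  · refine mul_pos (integral_pos hlt hg.continuousOn ?_ ⟨b, right_mem_Icc.2 hlt.le, hb⟩)
      (sub_pos.2 hlt)
    exact fun x hx => h0 x (Ioc_subset_Icc_self.trans Icc_subset_uIcc hx)
  · rw [integral_symm]
    refine mul_pos_of_neg_of_neg (neg_neg_of_pos (integral_pos hgt hg.continuousOn ?_
      ⟨b, left_mem_Icc.2 hgt.le, hb⟩)) (sub_neg.2 hgt)
    exact fun x hx => h0 x (Ioc_subset_Icc_self.trans Icc_subset_uIcc' hx)

/-- integration of (Gu)' = fGu + h near a simple zero y₁ of G: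
    integrability of u forces the explicit formula, and h > 0 on a set of
    positive measure on one side of y₁ forces u < 0 somewhere on that side. -/
theorem stmt15 (y₁ ε M : ℝ) (hε : 0 < ε)
    (G f h u : ℝ → ℝ)
    (hG : ContDiff ℝ 1 G) (hGy₁ : G y₁ = 0) (hG' : deriv G y₁ < 0)
    (hGzero : ∀ y ∈ Set.Ioo (y₁ - ε) (y₁ + ε), G y = 0 → y = y₁)
    (hf_meas : Measurable f) (hf_bdd : ∀ y, |f y| ≤ M)
    (hh_cont : Continuous h) (hh_nonneg : ∀ y ∈ Set.Ioo (y₁ - ε) (y₁ + ε), 0 ≤ h y)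
    (hu_int : IntegrableOn u (Set.Ioo (y₁ - ε) (y₁ + ε)))
    (hode : ∀ y ∈ Set.Ioo (y₁ - ε) (y₁ + ε), y ≠ y₁ →
      HasDerivAt (fun z => G z * u z) (f y * G y * u y + h y) y) :
    (∀ y ∈ Set.Ioo (y₁ - ε) (y₁ + ε), y ≠ y₁ →
      u y = (1 / G y) * Real.exp (∫ s in y₁..y, f s) *
        ∫ s in y₁..y, Real.exp (-(∫ w in y₁..s, f w)) * h s) ∧
    (∀ I : Set ℝ, (I = Set.Ioo y₁ (y₁ + ε) ∨ I = Set.Ioo (y₁ - ε) y₁) →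
      0 < volume {y ∈ I | 0 < h y} → ∃ y ∈ I, u y < 0) := by
  have hf : LocallyIntegrable f volume :=
    (memLp_top_of_bound hf_meas.aestronglyMeasurable M (ae_of_all _ hf_bdd)).locallyIntegrable
      le_top
  have hGu := mul_eq_exp_integral_mul_integral_of_integrableOn_Ioo
    (hG.differentiable one_ne_zero y₁) hGy₁ hf hh_cont hu_int
    fun y hy hne => mul_assoc (f y) (G y) (u y) ▸ hode y hy hne
  refine ⟨fun y hy hne => ?_, fun I hI hpos => ?_⟩
  · have hGy : G y ≠ 0 := fun h0 => hne (hGzero y hy h0)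
    rw [mul_assoc, ← hGu y hy hne]
    field_simp
  obtain ⟨y, hyI, hhy⟩ := nonempty_of_measure_ne_zero hpos.ne'
  obtain ⟨hy, hne⟩ : y ∈ Ioo (y₁ - ε) (y₁ + ε) ∧ y ≠ y₁ := by
    rcases hI with rfl | rfl <;> obtain ⟨h1, h2⟩ := hyI <;>
      exact ⟨⟨by linarith, by linarith⟩, by linarith⟩
  have hy₁ : y₁ ∈ Ioo (y₁ - ε) (y₁ + ε) := ⟨by linarith, by linarith⟩
  have hGsign := mul_sub_neg_of_deriv_neg ordConnected_Ioo hG.continuous.continuousOn hGy₁ hG'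
    hGzero hy₁ hy hne
  have hHsign := integral_mul_sub_pos
    ((continuous_exp.comp (continuous_primitive hf.intervalIntegrable y₁).neg).mul hh_cont)
    hne.symm (fun x hx => mul_nonneg (exp_pos _).le
      (hh_nonneg x (ordConnected_Ioo.uIcc_subset hy₁ hy hx))) (mul_pos (exp_pos _) hhy)
  refine ⟨y, hyI, neg_of_mul_pos_left ?_ hGsign.le⟩
  rw [show u y * (G y * (y - y₁)) = exp (∫ s in y₁..y, f s) *
      ((∫ s in y₁..y, exp (-∫ w in y₁..s, f w) * h s) * (y - y₁)) by
    linear_combination (y - y₁) * hGu y hy hne]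
  exact mul_pos (exp_pos _) hHsign
end
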